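/- arXiv:dg-ga/9509003 — 2 statements merged into one kernel-verified Lean document; each statement's English description precedes it below -/
import Mathlib

section
/- Let c > 0, n ≥ 3, and suppose σ is smooth on the closed ball of radius R in ℝⁿ, satisfies Δσ ≥ -c(1+|x|²)^{-3/2} on B_R, and σ = 0 on ∂B_R. Then σ ≤ c/(n-2) on B_R. -/
open Real Filter Metric

/-- Euclidean Laplacian via repeated directional derivatives. -/
noncomputable def lap {n : ℕ} (f : EuclideanSpace ℝ (Fin n) → ℝ)
    (x : EuclideanSpace ℝ (Fin n)) : ℝ :=
  ∑ j, fderiv ℝ (fun y => fderiv ℝ f y (EuclideanSpace.single j 1)) x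
      (EuclideanSpace.single j 1)

section Aux

open MeasureTheory Set Topology

lemma base_half {θ t : ℝ} (hθ0 : 0 < θ) (hθ1 : θ ≤ 1) (ht : -(1/2:ℝ) ≤ t) :
    (1/2:ℝ) ≤ 1 + θ * t := by nlinarith

lemma contOn_aux (γ δ t : ℝ) (ht : -(1/2:ℝ) ≤ t) :
    ContinuousOn (fun θ : ℝ => θ ^ γ * (1 + θ * t) ^ (-δ)) (Ioc 0 1) := by
  intro θ hθ
  have h1 : (0:ℝ) < 1 + θ * t := lt_of_lt_of_le (by norm_num) (base_half hθ.1 hθ.2 ht)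
  exact (ContinuousAt.continuousWithinAt
    (((Real.continuousAt_rpow_const θ γ (Or.inl hθ.1.ne'))).mul
      ((((continuous_const.add ((continuous_id).mul continuous_const))).continuousAt).rpow_const
        (Or.inl h1.ne'))))

lemma half_rpow_neg (δ : ℝ) : ((1:ℝ)/2) ^ (-δ) = 2 ^ δ := by
  rw [one_div, Real.inv_rpow (by norm_num), ← Real.rpow_neg (by norm_num), neg_neg]

lemma integrable_aux (γ δ t : ℝ) (hγ : -1 < γ) (hδ : 0 ≤ δ) (ht : -(1/2:ℝ) ≤ t) :
    IntegrableOn (fun θ : ℝ => θ ^ γ * (1 + θ * t) ^ (-δ)) (Ioc 0 1) := by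
  have hb : IntegrableOn (fun θ : ℝ => (2:ℝ) ^ δ * θ ^ γ) (Ioc 0 1) :=
    ((intervalIntegral.intervalIntegrable_rpow' hγ (a := 0) (b := 1)).1).const_mul _
  refine Integrable.mono' hb ((contOn_aux γ δ t ht).aestronglyMeasurable measurableSet_Ioc) ?_
  filter_upwards [ae_restrict_mem measurableSet_Ioc] with θ hθ
  have h1 : (1/2:ℝ) ≤ 1 + θ * t := base_half hθ.1 hθ.2 ht
  have h0 : (0:ℝ) < 1 + θ * t := lt_of_lt_of_le (by norm_num) h1
  rw [Real.norm_eq_abs, abs_of_nonneg (mul_nonneg (Real.rpow_nonneg hθ.1.le _)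
    (Real.rpow_nonneg h0.le _)), mul_comm ((2:ℝ) ^ δ)]
  refine mul_le_mul_of_nonneg_left ?_ (Real.rpow_nonneg hθ.1.le _)
  calc (1 + θ * t) ^ (-δ) ≤ ((1:ℝ)/2) ^ (-δ) :=
        Real.rpow_le_rpow_of_nonpos (by norm_num) h1 (neg_nonpos.2 hδ)
    _ = 2 ^ δ := half_rpow_neg δ

lemma key_deriv (γ δ : ℝ) (hγ : -(1/2:ℝ) ≤ γ) (hδ0 : 0 < δ) {t₀ : ℝ}
    (ht₀ : 0 ≤ t₀) :
    HasDerivAt (fun t => ∫ θ in Ioc (0:ℝ) 1, θ ^ γ * (1 + θ * t) ^ (-δ))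
      (-δ * ∫ θ in Ioc (0:ℝ) 1, θ ^ (γ + 1) * (1 + θ * t₀) ^ (-δ - 1)) t₀ := by
  have hγ1 : (-1:ℝ) < γ := by linarith
  have hball : ∀ t ∈ ball t₀ (1/4:ℝ), -(1/2:ℝ) ≤ t := by
    intro t htb
    rw [Real.ball_eq_Ioo] at htb
    linarith [htb.1]
  have h := hasDerivAt_integral_of_dominated_loc_of_deriv_le
    (F := fun t θ => θ ^ γ * (1 + θ * t) ^ (-δ))
    (F' := fun t θ => -δ * (θ ^ (γ + 1) * (1 + θ * t) ^ (-δ - 1)))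
    (μ := volume.restrict (Ioc (0:ℝ) 1)) (x₀ := t₀)
    (bound := fun θ => δ * ((2:ℝ) ^ (δ + 1) * θ ^ γ))
    (s := ball t₀ (1/4)) (ball_mem_nhds t₀ (by norm_num : (0:ℝ) < 1/4))
    ?_ ?_ ?_ ?_ ?_ ?_
  · obtain ⟨-, h2⟩ := h
    convert h2 using 1
    · rfl
    · rfl
    rw [← MeasureTheory.integral_const_mul]
  · filter_upwards [eventually_gt_nhds (show -(1/2:ℝ) < t₀ by linarith)] with t ht
    exact ((contOn_aux γ δ t ht.le).aestronglyMeasurable measurableSet_Ioc)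
  · exact integrable_aux γ δ t₀ hγ1 hδ0.le (by linarith)
  · have : ContinuousOn (fun θ : ℝ => -δ * (θ ^ (γ+1) * (1 + θ * t₀) ^ (-(δ+1)))) (Ioc 0 1) :=
      (contOn_aux (γ+1) (δ+1) t₀ (by linarith)).const_smul (-δ)
    have h2 : ∀ θ : ℝ, -δ * (θ ^ (γ+1) * (1 + θ * t₀) ^ (-(δ+1)))
        = -δ * (θ ^ (γ+1) * (1 + θ * t₀) ^ (-δ-1)) := by
      intro θ; ring_nf
    simp only [h2] at this
    exact this.aestronglyMeasurable measurableSet_Ioc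
  · filter_upwards [ae_restrict_mem measurableSet_Ioc] with θ hθ
    intro t htb
    have ht : -(1/2:ℝ) ≤ t := hball t htb
    have h1 : (1/2:ℝ) ≤ 1 + θ * t := base_half hθ.1 hθ.2 ht
    have h0 : (0:ℝ) < 1 + θ * t := lt_of_lt_of_le (by norm_num) h1
    rw [norm_mul, Real.norm_eq_abs (-δ), abs_of_nonpos (by linarith), neg_neg, Real.norm_eq_abs,
      abs_of_nonneg (mul_nonneg (Real.rpow_nonneg hθ.1.le _) (Real.rpow_nonneg h0.le _))]
    refine mul_le_mul_of_nonneg_left ?_ hδ0.le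
    have e1 : θ ^ (γ+1) ≤ θ ^ γ := Real.rpow_le_rpow_of_exponent_ge hθ.1 hθ.2 (by linarith)
    have e2 : (1 + θ * t) ^ (-δ-1) ≤ (2:ℝ) ^ (δ+1) := by
      calc (1 + θ * t) ^ (-δ-1) ≤ ((1:ℝ)/2) ^ (-δ-1) :=
            Real.rpow_le_rpow_of_nonpos (by norm_num) h1 (by linarith)
        _ = ((1:ℝ)/2) ^ (-(δ+1)) := by ring_nf
        _ = 2 ^ (δ+1) := half_rpow_neg (δ+1)
    calc θ ^ (γ+1) * (1 + θ * t) ^ (-δ-1) ≤ θ ^ γ * (2:ℝ) ^ (δ+1) := by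
          apply mul_le_mul e1 e2 (Real.rpow_nonneg h0.le _) (Real.rpow_nonneg hθ.1.le _)
      _ = (2:ℝ) ^ (δ+1) * θ ^ γ := by ring
  · exact (((intervalIntegral.intervalIntegrable_rpow' hγ1 (a := 0) (b := 1)).1).const_mul
      _).const_mul _
  · filter_upwards [ae_restrict_mem measurableSet_Ioc] with θ hθ
    intro t htb
    have ht : -(1/2:ℝ) ≤ t := hball t htb
    have h0 : (0:ℝ) < 1 + θ * t := lt_of_lt_of_le (by norm_num) (base_half hθ.1 hθ.2 ht)
    have hu : HasDerivAt (fun t : ℝ => 1 + θ * t) θ t := by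
      simpa using ((hasDerivAt_id t).const_mul θ).const_add 1
    have hr : HasDerivAt (fun t : ℝ => (1 + θ * t) ^ (-δ))
        ((-δ) * (1 + θ * t) ^ (-δ - 1) * θ) t :=
      by have h := (Real.hasDerivAt_rpow_const (x := 1 + θ * t) (p := -δ) (Or.inl h0.ne')).comp t hu; exact h
    have := hr.const_mul (θ ^ γ)
    convert this using 1
    · rfl
    rw [Real.rpow_add hθ.1, Real.rpow_one]
    ring

lemma ftc_theta (m t : ℝ) (hm : 1 ≤ m) (ht : 0 ≤ t) :
    ∫ θ in Ioc (0:ℝ) 1,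
      (m * (θ ^ (m-1) * (1 + θ * t) ^ (-(3/2:ℝ))) - (3/2*t) * (θ ^ m * (1 + θ * t) ^ (-(5/2:ℝ))))
      = (1 + t) ^ (-(3/2:ℝ)) := by
  have hm0 : (0:ℝ) < m := by linarith
  set A : ℝ → ℝ := fun θ => θ ^ m * (1 + θ * t) ^ (-(3/2:ℝ)) with hA
  set A' : ℝ → ℝ := fun θ =>
    m * (θ ^ (m-1) * (1 + θ * t) ^ (-(3/2:ℝ))) - (3/2*t) * (θ ^ m * (1 + θ * t) ^ (-(5/2:ℝ)))
    with hA'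
  have hpos : ∀ θ : ℝ, 0 ≤ θ → (0:ℝ) < 1 + θ * t := by
    intro θ hθ; nlinarith
  have hcont : ContinuousOn A (Icc 0 1) := by
    intro θ hθ
    exact (ContinuousAt.continuousWithinAt
      ((Real.continuousAt_rpow_const θ m (Or.inr hm0.le)).mul
        ((((continuous_const.add ((continuous_id).mul continuous_const))).continuousAt).rpow_const
          (Or.inl (hpos θ hθ.1).ne'))))
  have hderiv : ∀ θ ∈ Ioo (0:ℝ) 1, HasDerivAt A (A' θ) θ := by
    intro θ hθ
    have h0 := hpos θ hθ.1.le
    have h1 : HasDerivAt (fun θ : ℝ => θ ^ m) (m * θ ^ (m-1)) θ :=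
      Real.hasDerivAt_rpow_const (Or.inl hθ.1.ne')
    have hu : HasDerivAt (fun θ : ℝ => 1 + θ * t) t θ := by
      simpa using ((hasDerivAt_id θ).mul_const t).const_add 1
    have h2 : HasDerivAt (fun θ : ℝ => (1 + θ * t) ^ (-(3/2:ℝ)))
        ((-(3/2:ℝ)) * (1 + θ * t) ^ (-(3/2:ℝ) - 1) * t) θ :=
      by have h := (Real.hasDerivAt_rpow_const (x := 1 + θ * t) (p := -(3/2:ℝ)) (Or.inl h0.ne')).comp θ hu; exact h
    have := h1.mul h2
    convert this using 1
    · rfl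
    · rfl
    · rfl
    rw [show (-(3/2:ℝ) - 1) = -(5/2:ℝ) by norm_num]
    ring
  have hint : IntervalIntegrable A' volume 0 1 := by
    rw [intervalIntegrable_iff_integrableOn_Ioc_of_le zero_le_one]
    exact (((integrable_aux (m-1) (3/2) t (by linarith) (by norm_num) (by linarith)).const_mul
      m)).sub ((integrable_aux m (5/2) t (by linarith) (by norm_num) (by linarith)).const_mul _)
  have := intervalIntegral.integral_eq_sub_of_hasDeriv_right_of_le zero_le_one hcont
    (fun θ hθ => (hderiv θ hθ).hasDerivWithinAt) hint
  rw [intervalIntegral.integral_of_le zero_le_one] at this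
  rw [this, hA]
  simp only []
  rw [Real.one_rpow, Real.zero_rpow hm0.ne', one_mul, zero_mul]
  norm_num

lemma second_deriv_test {w w' : ℝ → ℝ} {A : ℝ}
    (hmax : IsLocalMax w 0)
    (hw : ∀ᶠ s in 𝓝 (0:ℝ), HasDerivAt w (w' s) s)
    (hw' : HasDerivAt w' A 0) : A ≤ 0 := by
  by_contra hA
  push_neg at hA
  have h00 : w' 0 = 0 := by
    have h1 : deriv w 0 = w' 0 := (hw.self_of_nhds).deriv
    rw [← h1]
    exact hmax.deriv_eq_zero
  have hslope : Tendsto (slope w' 0) (𝓝[≠] 0) (𝓝 A) :=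
    (hasDerivAt_iff_tendsto_slope).1 hw'
  have hpos : ∀ᶠ s in 𝓝[>] (0:ℝ), 0 < w' s := by
    have h2 : ∀ᶠ s in 𝓝[>] (0:ℝ), 0 < slope w' 0 s := by
      apply (hslope.mono_left (nhdsWithin_mono _ (fun s hs => ne_of_gt hs))).eventually
      exact eventually_gt_nhds hA
    filter_upwards [h2, self_mem_nhdsWithin] with s hs hs0
    have : slope w' 0 s = w' s / s := by
      simp [slope_def_field, h00]
    rw [this] at hs
    have := mul_pos hs (show (0:ℝ) < s from hs0)
    rwa [div_mul_cancel₀] at this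
    exact ne_of_gt hs0
  have hcomb : ∀ᶠ s in 𝓝[>] (0:ℝ), 0 < w' s ∧ (HasDerivAt w (w' s) s ∧ w s ≤ w 0) := by
    filter_upwards [hpos, (hw.and hmax).filter_mono nhdsWithin_le_nhds] with s h1 h2
    exact ⟨h1, h2⟩
  rw [eventually_nhdsWithin_iff, Metric.eventually_nhds_iff] at hcomb
  obtain ⟨ε, hε, hP⟩ := hcomb
  set b := ε/2 with hb
  have hbε : ∀ s : ℝ, s ∈ Icc 0 b → dist s 0 < ε := by
    intro s hs
    rw [Real.dist_eq, sub_zero, abs_of_nonneg hs.1]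
    have := hs.2; simp only [hb] at this ⊢; linarith
  have hbpos : 0 < b := by positivity
  have hmono : StrictMonoOn w (Icc 0 b) := by
    apply strictMonoOn_of_deriv_pos (convex_Icc 0 b)
    · intro s hs
      rcases eq_or_lt_of_le hs.1 with h | h
      · subst h
        exact (hw.self_of_nhds).continuousAt.continuousWithinAt
      · exact (((hP (hbε s hs)) h).2.1.continuousAt).continuousWithinAt
    · intro s hs
      rw [interior_Icc] at hs
      have h := hP (hbε s ⟨hs.1.le, hs.2.le⟩) hs.1
      rw [h.2.1.deriv]
      exact h.1
  have h1 : w 0 < w b := hmono (left_mem_Icc.2 hbpos.le) (right_mem_Icc.2 hbpos.le) hbpos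
  have h2 : w b ≤ w 0 := (hP (hbε b (right_mem_Icc.2 hbpos.le)) hbpos).2.2
  linarith

lemma hasDeriv_P0 (β : ℝ) (hβ : -(1/2:ℝ) ≤ β) {t : ℝ} (ht : 0 ≤ t) :
    HasDerivAt (fun t => ∫ θ in Ioc (0:ℝ) 1, θ ^ β * (1 + θ * t) ^ (-(1/2:ℝ)))
      (-(1/2:ℝ) * ∫ θ in Ioc (0:ℝ) 1, θ ^ (β+1) * (1 + θ * t) ^ (-(3/2:ℝ))) t := by
  have h := key_deriv β (1/2) hβ (by norm_num) ht
  rwa [show (-(1/2:ℝ) - 1) = (-(3/2:ℝ)) by norm_num] at h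

lemma hasDeriv_P1 (β : ℝ) (hβ : -(1/2:ℝ) ≤ β) {t : ℝ} (ht : 0 ≤ t) :
    HasDerivAt (fun t => ∫ θ in Ioc (0:ℝ) 1, θ ^ (β+1) * (1 + θ * t) ^ (-(3/2:ℝ)))
      (-(3/2:ℝ) * ∫ θ in Ioc (0:ℝ) 1, θ ^ (β+1+1) * (1 + θ * t) ^ (-(5/2:ℝ))) t := by
  have h := key_deriv (β+1) (3/2) (by linarith) (by norm_num) ht
  rwa [show (-(3/2:ℝ) - 1) = (-(5/2:ℝ)) by norm_num] at h

lemma ode_lemma (n : ℕ) (β t : ℝ) (hβ : -(1/2:ℝ) ≤ β) (hn4 : (n:ℝ) = 2*β+4) (ht : 0 ≤ t) :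
    (n:ℝ) * (∫ θ in Ioc (0:ℝ) 1, θ ^ (β+1) * (1 + θ * t) ^ (-(3/2:ℝ)))
      - 3*t*(∫ θ in Ioc (0:ℝ) 1, θ ^ (β+1+1) * (1 + θ * t) ^ (-(5/2:ℝ)))
      = 2*(1+t) ^ (-(3:ℝ)/2) := by
  have hftc := ftc_theta (β+2) t (by linarith) ht
  rw [show β+2-1 = β+1 by ring] at hftc
  rw [show β+2 = β+1+1 by ring] at hftc
  rw [MeasureTheory.integral_sub
    ((integrable_aux (β+1) (3/2) t (by linarith) (by norm_num) (by linarith)).const_mul _)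
    ((integrable_aux (β+1+1) (5/2) t (by linarith) (by norm_num) (by linarith)).const_mul _),
    MeasureTheory.integral_const_mul, MeasureTheory.integral_const_mul] at hftc
  rw [show (-(3:ℝ)/2) = (-(3/2:ℝ)) by norm_num]
  linear_combination 2 * hftc
    + (∫ θ in Ioc (0:ℝ) 1, θ ^ (β+1) * (1 + θ * t) ^ (-(3/2:ℝ))) * hn4

lemma P0_nonneg (β t : ℝ) (ht : 0 ≤ t) :
    0 ≤ ∫ θ in Ioc (0:ℝ) 1, θ ^ β * (1 + θ * t) ^ (-(1/2:ℝ)) :=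
  setIntegral_nonneg measurableSet_Ioc (fun θ hθ => mul_nonneg (Real.rpow_nonneg hθ.1.le _)
    (Real.rpow_nonneg (by nlinarith [hθ.1.le, hθ.2]) _))

lemma P0_bound (n : ℕ) (β t : ℝ) (hβ1 : (-1:ℝ) < β) (hβn : β + 1 = ((n:ℝ)-2)/2)
    (hn2 : (2:ℝ) < (n:ℝ)) (ht : 0 ≤ t) :
    ∫ θ in Ioc (0:ℝ) 1, θ ^ β * (1 + θ * t) ^ (-(1/2:ℝ)) ≤ 2/((n:ℝ)-2) := by
  have hβ0 : (0:ℝ) < β + 1 := by rw [hβn]; linarith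
  have h1 : ∫ θ in Ioc (0:ℝ) 1, θ ^ β * (1 + θ * t) ^ (-(1/2:ℝ))
      ≤ ∫ θ in Ioc (0:ℝ) 1, θ ^ β := by
    apply setIntegral_mono_on (integrable_aux β (1/2) t hβ1 (by norm_num) (by linarith))
      ((intervalIntegral.intervalIntegrable_rpow' hβ1 (a := 0) (b := 1)).1) measurableSet_Ioc
    intro θ hθ
    have h2 : (1 + θ * t) ^ (-(1/2:ℝ)) ≤ 1 :=
      Real.rpow_le_one_of_one_le_of_nonpos (by nlinarith [hθ.1]) (by norm_num)
    calc θ ^ β * (1 + θ * t) ^ (-(1/2:ℝ)) ≤ θ ^ β * 1 :=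
          mul_le_mul_of_nonneg_left h2 (Real.rpow_nonneg hθ.1.le _)
      _ = θ ^ β := mul_one _
  have h3 : ∫ θ in Ioc (0:ℝ) 1, θ ^ β = 1/(β+1) := by
    rw [← intervalIntegral.integral_of_le zero_le_one]
    rw [_root_.integral_rpow (Or.inl hβ1)]
    rw [Real.one_rpow, Real.zero_rpow hβ0.ne']
    ring
  refine h1.trans ?_
  rw [h3, hβn, one_div_div]

end Aux

section Interior
open MeasureTheory Set Topology
lemma interior_step (n : ℕ) (hn : 3 ≤ n) (c R ε' : ℝ) (hc : 0 < c) (hR : 0 < R)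
    (hε' : 0 < ε')
    (σ : EuclideanSpace ℝ (Fin n) → ℝ)
    (hsmooth : ContDiffOn ℝ (⊤ : ℕ∞) σ (closedBall (0 : EuclideanSpace ℝ (Fin n)) R))
    (hsub : ∀ x ∈ ball (0 : EuclideanSpace ℝ (Fin n)) R,
      -(c * (1 + ‖x‖ ^ 2) ^ (-(3 : ℝ) / 2)) ≤ lap σ x)
    (P0 P1 P2 : ℝ → ℝ)
    (hP0' : ∀ t : ℝ, 0 ≤ t → HasDerivAt P0 (-(1/2:ℝ) * P1 t) t)
    (hP1' : ∀ t : ℝ, 0 ≤ t → HasDerivAt P1 (-(3/2:ℝ) * P2 t) t)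
    (hODE : ∀ t : ℝ, 0 ≤ t → (n:ℝ) * P1 t - 3*t*P2 t = 2*(1+t) ^ (-(3:ℝ)/2))
    (x₀ : EuclideanSpace ℝ (Fin n)) (hx₀b : x₀ ∈ ball (0 : EuclideanSpace ℝ (Fin n)) R)
    (hx₀ : IsMaxOn (fun y => σ y + ε' * ‖y‖^2 - (c/2) * (P0 (‖y‖^2) - P0 (R^2)))
      (closedBall (0 : EuclideanSpace ℝ (Fin n)) R) x₀) :
    False := by
  set q : EuclideanSpace ℝ (Fin n) → ℝ := fun y => ‖y‖^2 with hqdef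
  set w : EuclideanSpace ℝ (Fin n) → ℝ := fun y => σ y + ε' * q y - (c/2) * (P0 (q y) - P0 (R^2)) with hwdef
  have hqnn : ∀ y : EuclideanSpace ℝ (Fin n), 0 ≤ q y := fun y => sq_nonneg _
  set t₀ : ℝ := q x₀ with ht₀def
  have ht₀ : 0 ≤ t₀ := hqnn x₀
  have hq : ∀ y : EuclideanSpace ℝ (Fin n), HasFDerivAt q ((2:ℕ) • (innerSL ℝ y)) y := fun y =>
    (hasStrictFDerivAt_norm_sq y).hasFDerivAt
  -- differentiability of σ near x₀
  have hnhds : ∀ y ∈ ball (0:EuclideanSpace ℝ (Fin n)) R, closedBall (0:EuclideanSpace ℝ (Fin n)) R ∈ 𝓝 y := fun y hy =>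
    Filter.mem_of_superset (isOpen_ball.mem_nhds hy) ball_subset_closedBall
  have hσCD : ∀ y ∈ ball (0:EuclideanSpace ℝ (Fin n)) R, ContDiffAt ℝ (⊤ : ℕ∞) σ y := fun y hy =>
    hsmooth.contDiffAt (hnhds y hy)
  -- total derivative of w on the ball
  set W' : EuclideanSpace ℝ (Fin n) → (EuclideanSpace ℝ (Fin n) →L[ℝ] ℝ) := fun y =>
    fderiv ℝ σ y + ε' • ((2:ℕ) • (innerSL ℝ y))
      - ((c/2) * (-(1/2:ℝ) * P1 (q y))) • ((2:ℕ) • (innerSL ℝ y)) with hW'def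
  have hW' : ∀ y ∈ ball (0:EuclideanSpace ℝ (Fin n)) R, HasFDerivAt w (W' y) y := by
    intro y hy
    have h1 : HasFDerivAt σ (fderiv ℝ σ y) y :=
      (((hσCD y hy).differentiableAt (by simp))).hasFDerivAt
    have h2 : HasFDerivAt (fun y : EuclideanSpace ℝ (Fin n) => ε' * q y) (ε' • ((2:ℕ) • (innerSL ℝ y))) y :=
      (hq y).const_mul ε'
    have h3 : HasDerivAt (fun t => (c/2) * (P0 t - P0 (R^2)))
        ((c/2) * (-(1/2:ℝ) * P1 (q y))) (q y) :=
      ((hP0' (q y) (hqnn y)).sub_const (P0 (R^2))).const_mul (c/2)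
    have h4 : HasFDerivAt (fun y : EuclideanSpace ℝ (Fin n) => (c/2) * (P0 (q y) - P0 (R^2)))
        (((c/2) * (-(1/2:ℝ) * P1 (q y))) • ((2:ℕ) • (innerSL ℝ y))) y :=
      h3.comp_hasFDerivAt y (hq y)
    exact (h1.add h2).sub h4
  -- coordinate evaluation of W'
  have hWj : ∀ (y : EuclideanSpace ℝ (Fin n)) (j : Fin n), W' y (EuclideanSpace.single j 1)
      = fderiv ℝ σ y (EuclideanSpace.single j 1) + 2*ε' * (y j)
        + (c/2) * P1 (q y) * (y j) := by
    intro y j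
    have hinner : (inner ℝ y (EuclideanSpace.single j (1:ℝ)) : ℝ) = y j := by
      rw [EuclideanSpace.inner_single_right]; simp
    simp only [hW'def, ContinuousLinearMap.add_apply, ContinuousLinearMap.sub_apply,
      ContinuousLinearMap.smul_apply, innerSL_apply_apply, smul_eq_mul, nsmul_eq_mul, Nat.cast_ofNat,
      hinner]
    ring
  -- basis vectors
  have hA : ∀ j : Fin n, (fderiv ℝ (fun y => fderiv ℝ σ y (EuclideanSpace.single j 1)) x₀
      (EuclideanSpace.single j 1))
      + (2*ε' + ((c/2) * P1 t₀ - (3*(c/2)) * P2 t₀ * (x₀ j)^2)) ≤ 0 := by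
    intro j
    set e : EuclideanSpace ℝ (Fin n) := EuclideanSpace.single j 1 with hedef
    set L : ℝ → EuclideanSpace ℝ (Fin n) := fun s => x₀ + s • e with hLdef
    have hL : ∀ s : ℝ, HasDerivAt L e s := by
      intro s
      simpa [hLdef] using ((hasDerivAt_id s).smul_const e).const_add x₀
    have hL0 : L 0 = x₀ := by simp [hLdef]
    have hev : ∀ᶠ s in 𝓝 (0:ℝ), L s ∈ ball (0:EuclideanSpace ℝ (Fin n)) R := by
      have hLc : ContinuousAt L 0 := (hL 0).continuousAt
      have hmem : ball (0:EuclideanSpace ℝ (Fin n)) R ∈ 𝓝 (L 0) := by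
        rw [hL0]; exact isOpen_ball.mem_nhds hx₀b
      exact hLc.preimage_mem_nhds hmem
    have hlm : IsLocalMax (fun s => w (L s)) 0 := by
      filter_upwards [hev] with s hs
      have h := hx₀ (ball_subset_closedBall hs)
      simpa [hL0] using h
    have hwev : ∀ᶠ s in 𝓝 (0:ℝ), HasDerivAt (fun s => w (L s)) (W' (L s) e) s := by
      filter_upwards [hev] with s hs
      exact (hW' (L s) hs).comp_hasDerivAt s (hL s)
    have hLj : ∀ s : ℝ, (L s) j = x₀ j + s := by
      intro s
      simp [hLdef, hedef, EuclideanSpace.single_apply]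
    have hLjd : HasDerivAt (fun s : ℝ => (L s) j) 1 0 := by
      have h : HasDerivAt (fun s : ℝ => x₀ j + s) 1 0 := by
        simpa using (hasDerivAt_id (0:ℝ)).const_add (x₀ j)
      have hfeq : (fun s : ℝ => x₀ j + s) = (fun s : ℝ => (L s) j) := by
        funext s; rw [hLj s]
      rwa [hfeq] at h
    have hqL : HasDerivAt (fun s => q (L s)) (2 * (x₀ j)) 0 := by
      have hl : HasFDerivAt q ((2:ℕ) • (innerSL ℝ x₀)) (L 0) := by
        rw [hL0]; exact hq x₀
      have h := hl.comp_hasDerivAt 0 (hL 0)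
      have heval : ((2:ℕ) • (innerSL ℝ x₀)) e = 2 * (x₀ j) := by
        have hinner : (inner ℝ x₀ (EuclideanSpace.single j (1:ℝ)) : ℝ) = x₀ j := by
          rw [EuclideanSpace.inner_single_right]; simp
        simp [hedef, hinner]
      rw [heval] at h
      exact h
    have hP1L : HasDerivAt (fun s => P1 (q (L s))) ((-(3/2:ℝ) * P2 t₀) * (2 * (x₀ j))) 0 := by
      have hg : HasDerivAt P1 (-(3/2:ℝ) * P2 t₀) (q (L 0)) := by
        rw [hL0]; exact hP1' t₀ ht₀
      exact hg.comp 0 hqL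
    have hσ1 : ContDiffAt ℝ (⊤ : ℕ∞) (fun y => fderiv ℝ σ y e) x₀ :=
      ((hσCD x₀ hx₀b).fderiv_right (by simp)).clm_apply contDiffAt_const
    have hσ2 : DifferentiableAt ℝ (fun y => fderiv ℝ σ y e) x₀ :=
      hσ1.differentiableAt (by simp)
    have hσ3 : HasDerivAt (fun s => fderiv ℝ σ (L s) e)
        (fderiv ℝ (fun y => fderiv ℝ σ y e) x₀ e) 0 := by
      have hl : HasFDerivAt (fun y => fderiv ℝ σ y e)
          (fderiv ℝ (fun y => fderiv ℝ σ y e) x₀) (L 0) := by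
        rw [hL0]; exact hσ2.hasFDerivAt
      exact hl.comp_hasDerivAt 0 (hL 0)
    have hprod : HasDerivAt (fun s => (c/2) * P1 (q (L s)) * ((L s) j))
        ((c/2) * (((-(3/2:ℝ) * P2 t₀) * (2 * (x₀ j))) * (x₀ j) + P1 t₀ * 1)) 0 := by
      have h := (hP1L.mul hLjd).const_mul (c/2)
      have h1 : P1 (q (L 0)) = P1 t₀ := by rw [hL0]
      have h2 : (L 0) j = x₀ j := by rw [hL0]
      rw [h1, h2] at h
      have hfeq : (fun s => (c/2) * (P1 (q (L s)) * ((L s) j)))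
          = (fun s => (c/2) * P1 (q (L s)) * ((L s) j)) := by
        funext s; ring
      rw [← hfeq]
      exact h
    have hlin : HasDerivAt (fun s => 2*ε' * ((L s) j)) (2*ε' * 1) 0 := hLjd.const_mul (2*ε')
    have hbig : HasDerivAt (fun s => W' (L s) e)
        ((fderiv ℝ (fun y => fderiv ℝ σ y e) x₀ e) + 2*ε' * 1
          + (c/2) * (((-(3/2:ℝ) * P2 t₀) * (2 * (x₀ j))) * (x₀ j) + P1 t₀ * 1)) 0 := by
      have h := (hσ3.add hlin).add hprod
      have hfeq : (fun s => W' (L s) e)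
          = fun s => (fderiv ℝ σ (L s) e + 2*ε' * ((L s) j)
            + (c/2) * P1 (q (L s)) * ((L s) j)) := by
        funext s; exact hWj (L s) j
      rw [hfeq]
      exact h
    have hAj := second_deriv_test hlm hwev hbig
    have hre : (fderiv ℝ (fun y => fderiv ℝ σ y e) x₀ e)
        + (2*ε' + ((c/2) * P1 t₀ - (3*(c/2)) * P2 t₀ * (x₀ j)^2))
        = (fderiv ℝ (fun y => fderiv ℝ σ y e) x₀ e) + 2*ε' * 1
          + (c/2) * (((-(3/2:ℝ) * P2 t₀) * (2 * (x₀ j))) * (x₀ j) + P1 t₀ * 1) := by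
      ring
    rw [hre]
    exact hAj
  -- sum up
  have hsum : ∑ j, ((fderiv ℝ (fun y => fderiv ℝ σ y (EuclideanSpace.single j 1)) x₀
      (EuclideanSpace.single j 1))
      + (2*ε' + ((c/2) * P1 t₀ - (3*(c/2)) * P2 t₀ * (x₀ j)^2))) ≤ 0 :=
    Finset.sum_nonpos (fun j _ => hA j)
  rw [Finset.sum_add_distrib] at hsum
  have h1 : ∑ j, (fderiv ℝ (fun y => fderiv ℝ σ y (EuclideanSpace.single j 1)) x₀
      (EuclideanSpace.single j 1)) = lap σ x₀ := rfl
  have hnormsq : (∑ j, (x₀ j)^2) = t₀ := by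
    have h := real_inner_self_eq_norm_sq x₀
    have h2 : t₀ = ‖x₀‖^2 := rfl
    rw [h2, ← h]
    rw [h, EuclideanSpace.real_norm_sq_eq]
  have h2 : ∑ j : Fin n, (2*ε' + ((c/2) * P1 t₀ - (3*(c/2)) * P2 t₀ * (x₀ j)^2))
      = (n:ℝ) * (2*ε') + ((n:ℝ)*((c/2) * P1 t₀) - (3*(c/2)) * P2 t₀ * t₀) := by
    rw [Finset.sum_add_distrib, Finset.sum_const, Finset.sum_sub_distrib, Finset.sum_const,
      ← Finset.mul_sum, hnormsq]
    simp only [Finset.card_univ, Fintype.card_fin, nsmul_eq_mul]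
  rw [h1, h2] at hsum
  have hode := hODE t₀ ht₀
  have hlap := hsub x₀ hx₀b
  have ht₀eq : ‖x₀‖^2 = t₀ := rfl
  rw [ht₀eq] at hlap
  have hcomb : (n:ℝ)*((c/2) * P1 t₀) - (3*(c/2)) * P2 t₀ * t₀ = c * (1+t₀) ^ (-(3:ℝ)/2) := by
    linear_combination (c/2) * hode
  rw [hcomb] at hsum
  have hn3 : (3:ℝ) ≤ (n:ℝ) := by exact_mod_cast hn
  nlinarith [hsum, hlap, mul_pos (mul_pos (show (0:ℝ) < 2 by norm_num) hε') (show (0:ℝ) < (n:ℝ) by linarith)]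

end Interior


open Set in
/-- if `c > 0`, `n ≥ 3`, `σ` is smooth on the closed ball of radius `R`,
`Δσ ≥ -c(1+|x|²)^{-3/2}` on `B_R`, and `σ = 0` on `∂B_R`, then `σ ≤ c/(n-2)` on `B_R`. -/
theorem stmt_3 (n : ℕ) (hn : 3 ≤ n) (c R : ℝ) (hc : 0 < c) (hR : 0 < R)
    (σ : EuclideanSpace ℝ (Fin n) → ℝ)
    (hsmooth : ContDiffOn ℝ (⊤ : ℕ∞) σ (closedBall (0 : EuclideanSpace ℝ (Fin n)) R))
    (hsub : ∀ x ∈ ball (0 : EuclideanSpace ℝ (Fin n)) R,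
      -(c * (1 + ‖x‖ ^ 2) ^ (-(3 : ℝ) / 2)) ≤ lap σ x)
    (hbdry : ∀ x ∈ sphere (0 : EuclideanSpace ℝ (Fin n)) R, σ x = 0) :
    ∀ x ∈ ball (0 : EuclideanSpace ℝ (Fin n)) R, σ x ≤ c / ((n : ℝ) - 2) := by
  intro x hx
  have h3n : (3:ℝ) ≤ (n:ℝ) := by exact_mod_cast hn
  set β : ℝ := ((n:ℝ) - 4)/2 with hβdef
  have hβ : -(1/2:ℝ) ≤ β := by rw [hβdef]; linarith
  have hβ1 : (-1:ℝ) < β := by linarith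
  set P0 : ℝ → ℝ := fun t => ∫ θ in Ioc (0:ℝ) 1, θ ^ β * (1 + θ * t) ^ (-(1/2:ℝ)) with hP0def
  set P1 : ℝ → ℝ := fun t => ∫ θ in Ioc (0:ℝ) 1, θ ^ (β+1) * (1 + θ * t) ^ (-(3/2:ℝ)) with hP1def
  set P2 : ℝ → ℝ := fun t => ∫ θ in Ioc (0:ℝ) 1, θ ^ (β+1+1) * (1 + θ * t) ^ (-(5/2:ℝ)) with hP2def
  have hP0' : ∀ t : ℝ, 0 ≤ t → HasDerivAt P0 (-(1/2:ℝ) * P1 t) t := fun t ht =>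
    hasDeriv_P0 β hβ ht
  have hP1' : ∀ t : ℝ, 0 ≤ t → HasDerivAt P1 (-(3/2:ℝ) * P2 t) t := fun t ht =>
    hasDeriv_P1 β hβ ht
  have hODE : ∀ t : ℝ, 0 ≤ t → (n:ℝ) * P1 t - 3*t*P2 t = 2*(1+t) ^ (-(3:ℝ)/2) :=
    fun t ht => ode_lemma n β t hβ (by rw [hβdef]; ring) ht
  have hkey : ∀ ε' : ℝ, 0 < ε' → σ x ≤ c/((n:ℝ)-2) + ε' * R^2 := by
    intro ε' hε'
    set w : EuclideanSpace ℝ (Fin n) → ℝ :=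
      fun y => σ y + ε' * ‖y‖^2 - (c/2) * (P0 (‖y‖^2) - P0 (R^2)) with hwdef
    have hP0cont : Continuous (fun y : EuclideanSpace ℝ (Fin n) => P0 (‖y‖^2)) := by
      rw [continuous_iff_continuousAt]
      intro y
      exact ContinuousAt.comp (x := y) (g := P0) (f := fun y : EuclideanSpace ℝ (Fin n) => ‖y‖^2)
        ((hP0' (‖y‖^2) (sq_nonneg _)).continuousAt) ((continuous_norm.pow 2).continuousAt)
    have hwc : ContinuousOn w (closedBall (0:EuclideanSpace ℝ (Fin n)) R) := by
      apply ContinuousOn.sub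
      · exact hsmooth.continuousOn.add
          ((continuous_const.mul (continuous_norm.pow 2)).continuousOn)
      · exact (continuous_const.mul (hP0cont.sub continuous_const)).continuousOn
    obtain ⟨x₀, hx₀mem, hx₀⟩ :=
      (isCompact_closedBall (0:EuclideanSpace ℝ (Fin n)) R).exists_isMaxOn
        ⟨0, mem_closedBall_self hR.le⟩ hwc
    have hx₀le : ‖x₀‖ ≤ R := mem_closedBall_zero_iff.1 hx₀mem
    rcases lt_or_eq_of_le hx₀le with hlt | heq
    · exact (interior_step n hn c R ε' hc hR hε' σ hsmooth hsub P0 P1 P2 hP0' hP1' hODE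
        x₀ (mem_ball_zero_iff.2 hlt) hx₀).elim
    · have hσ0 : σ x₀ = 0 := hbdry x₀ (mem_sphere_zero_iff_norm.2 heq)
      have hq0 : ‖x₀‖^2 = R^2 := by rw [heq]
      have hwx₀ : w x₀ = ε' * R^2 := by
        have h : w x₀ = σ x₀ + ε' * ‖x₀‖^2 - (c/2) * (P0 (‖x₀‖^2) - P0 (R^2)) := rfl
        rw [h, hσ0, hq0, sub_self, mul_zero]
        ring
      have hwx : w x ≤ w x₀ := hx₀ (ball_subset_closedBall hx)
      rw [hwx₀] at hwx
      have hwx2 : σ x + ε' * ‖x‖^2 - (c/2) * (P0 (‖x‖^2) - P0 (R^2)) ≤ ε' * R^2 := hwx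
      have hn2 : (0:ℝ) < (n:ℝ) - 2 := by linarith
      have hvb : (c/2) * (P0 (‖x‖^2) - P0 (R^2)) ≤ c/((n:ℝ)-2) := by
        have h1 : P0 (‖x‖^2) ≤ 2/((n:ℝ)-2) :=
          P0_bound n β (‖x‖^2) hβ1 (by rw [hβdef]; ring) (by linarith) (sq_nonneg _)
        have h2 : 0 ≤ P0 (R^2) := P0_nonneg β (R^2) (sq_nonneg R)
        have h4 : (c/2) * (2/((n:ℝ)-2)) = c/((n:ℝ)-2) := by
          field_simp
        nlinarith
      nlinarith [mul_nonneg hε'.le (sq_nonneg ‖x‖)]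
  by_contra hcon
  push_neg at hcon
  have hR2 : (0:ℝ) < R^2 := by positivity
  have hd : (0:ℝ) < (σ x - c/((n:ℝ)-2))/(2*R^2) := by
    apply div_pos (by linarith) (by linarith)
  have h := hkey _ hd
  have he : ((σ x - c/((n:ℝ)-2))/(2*R^2)) * R^2 = (σ x - c/((n:ℝ)-2))/2 := by
    field_simp
  rw [he] at h
  linarith
end

section
/- Let n ≥ 3 and let σ : ℝⁿ → ℝ be continuous, bounded, nonnegative, and satisfy Δσ ≥ -c(1+|x|²)^{-3/2} in the distributional sense on all of ℝⁿ for some c > 0, with σ(x) obtained as a pointwise limit of functions σ_R vanishing on ∂B_R and satisfying σ_R + ν ≤ ν(R) on B_R, where ν(x) = -(c/(n-2))(1+|x|²)^{-1/2}. Then σ ≤ -cν on ℝⁿ; in particular σ(x) → 0 as |x| → ∞. -/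
open Real Filter MeasureTheory

/-- let `ν(x) = -(c/(n-2))(1+|x|²)^{-1/2}`.  If `σ ≥ 0` is continuous and
bounded on `ℝⁿ`, satisfies `Δσ ≥ -c(1+|x|²)^{-3/2}` distributionally, and is a pointwise
limit of functions `σ_R` vanishing on `∂B_R` with `σ_R + ν ≤ ν(R)` on `B_R`, then
`σ ≤ -ν` on `ℝⁿ`, i.e. `σ(x) ≤ (c/(n-2))(1+|x|²)^{-1/2}`; in particular `σ(x) → 0`
as `|x| → ∞`. -/
theorem stmt_8 (n : ℕ) (hn : 3 ≤ n) (c : ℝ) (hc : 0 < c)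
    (ν σ : EuclideanSpace ℝ (Fin n) → ℝ)
    (hν : ∀ x, ν x = -(c / ((n : ℝ) - 2)) * (1 + ‖x‖ ^ 2) ^ (-(1 : ℝ) / 2))
    (hσc : Continuous σ) (hσb : ∃ M, ∀ x, |σ x| ≤ M) (hσ0 : ∀ x, 0 ≤ σ x)
    (hdist : ∀ η : EuclideanSpace ℝ (Fin n) → ℝ, ContDiff ℝ (⊤ : ℕ∞) η →
      HasCompactSupport η → (∀ x, 0 ≤ η x) →
      ∫ x, -(c * (1 + ‖x‖ ^ 2) ^ (-(3 : ℝ) / 2)) * η x ≤ ∫ x, σ x * lap η x)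
    (σR : ℝ → EuclideanSpace ℝ (Fin n) → ℝ)
    (hRbdry : ∀ R > (0:ℝ), ∀ x, ‖x‖ = R → σR R x = 0)
    (hRcomp : ∀ R > (0:ℝ), ∀ x, ‖x‖ < R →
      σR R x + ν x ≤ -(c / ((n : ℝ) - 2)) * (1 + R ^ 2) ^ (-(1 : ℝ) / 2))
    (hlim : ∀ x, Tendsto (fun R => σR R x) atTop (nhds (σ x))) :
    (∀ x, σ x ≤ -ν x) ∧
    Tendsto σ (cocompact (EuclideanSpace ℝ (Fin n))) (nhds 0) := by
  have hn2 : (0:ℝ) < (n:ℝ) - 2 := by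
    have : (3:ℝ) ≤ n := by exact_mod_cast hn
    linarith
  have hcn : 0 < c / ((n:ℝ) - 2) := div_pos hc hn2
  have h1 : ∀ x, σ x ≤ -ν x := by
    intro x
    refine le_of_tendsto (hlim x) ?_
    filter_upwards [eventually_gt_atTop (max ‖x‖ 0)] with R hR
    have hR0 : 0 < R := lt_of_le_of_lt (le_max_right _ _) hR
    have hxR : ‖x‖ < R := lt_of_le_of_lt (le_max_left _ _) hR
    have h := hRcomp R hR0 x hxR
    have hp : 0 < (1 + R ^ 2 : ℝ) ^ (-(1:ℝ)/2) := Real.rpow_pos_of_pos (by positivity) _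
    nlinarith
  refine ⟨h1, ?_⟩
  have hnorm : Tendsto (fun x : EuclideanSpace ℝ (Fin n) => ‖x‖) (cocompact _) atTop :=
    tendsto_norm_cocompact_atTop
  have hg : Tendsto (fun R : ℝ => (c/((n:ℝ)-2)) * (1 + R ^ 2) ^ (-(1:ℝ)/2)) atTop (nhds 0) := by
    have h2 : Tendsto (fun R : ℝ => 1 + R ^ 2) atTop atTop :=
      tendsto_atTop_add_const_left _ _ (tendsto_pow_atTop two_ne_zero)
    have h3 : Tendsto (fun t : ℝ => t ^ (-(1:ℝ)/2)) atTop (nhds 0) := by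
      have := tendsto_rpow_neg_atTop (y := (1:ℝ)/2) (by norm_num)
      simpa [neg_div] using this
    have := (h3.comp h2).const_mul (c/((n:ℝ)-2))
    simpa using this
  have hgc : Tendsto (fun x : EuclideanSpace ℝ (Fin n) =>
      (c/((n:ℝ)-2)) * (1 + ‖x‖ ^ 2) ^ (-(1:ℝ)/2)) (cocompact _) (nhds 0) := hg.comp hnorm
  refine tendsto_of_tendsto_of_tendsto_of_le_of_le tendsto_const_nhds hgc hσ0 ?_
  intro x
  have h := h1 x
  rw [hν x] at h
  nlinarith [h]
end
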